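/- arXiv:2602.03277 — 11 statements merged into one kernel-verified Lean document; each statement's English description precedes it below -/
import Mathlib

section
/- The pair (β, γ) solves the first equation of BlockRR's linear system: (e^ε·b + s₁ − b)·β + s₂·γ = 1. Equivalently, the row of the BlockRR transition matrix corresponding to any true label y ∈ S₁ sums to 1. -/
/-!
Write `E = (e^ε - 1)·b`, so that the diagonal entries of the system are `E + s₁` and `E + s₂`.
Clearing the common denominator `κ`, the claim becomes the polynomial identity
`(E + s₁)·β₁ + s₂·γ₁ = κ`, both sides being `E² + E·(s₁ + s₂) + l·s₂`; this also shows `κ > 0`.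
-/

-- The terms carrying `l / s` cancel, so the identity holds for every `s`.
theorem blockRR_first_row_numerator_eq (E s₁ s₂ l s : ℝ) :
    (E + s₁) * (E + l * s₂ / s) + s₂ * ((E + l) - l / s * (E + s₁)) =
      (E + s₁) * (E + s₂) - (s₁ - l) * s₂ := by
  rw [mul_div_right_comm]
  ring

theorem blockRR_kappa_pos {E s₁ s₂ l : ℝ} (hE : 0 < E) (hs : 0 ≤ s₁ + s₂) (hl : 0 ≤ l)
    (hs₂ : 0 ≤ s₂) : 0 < (E + s₁) * (E + s₂) - (s₁ - l) * s₂ := by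
  have hκ : (E + s₁) * (E + s₂) - (s₁ - l) * s₂ = E * (E + (s₁ + s₂)) + l * s₂ := by ring
  rw [hκ]
  have : 0 < E * (E + (s₁ + s₂)) := mul_pos hE (by linarith)
  positivity

theorem blockRR_first_row_sum_general
    (ε b s₁ s₂ l : ℝ) (hε : 0 < ε) (hb : 1 ≤ b) (hs₂ : 0 ≤ s₂)
    (hl0 : 0 ≤ l) (hs : 1 ≤ s₁ + s₂)
    (s κ β₁ γ₁ β γ : ℝ)
    (hκ : κ = (Real.exp ε * b + s₁ - b) * (Real.exp ε * b + s₂ - b) - (s₁ - l) * s₂)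
    (hβ₁ : β₁ = (Real.exp ε - 1) * b + l * s₂ / s)
    (hγ₁ : γ₁ = ((Real.exp ε - 1) * b + l) - (l / s) * ((Real.exp ε - 1) * b + s₁))
    (hβ : β = β₁ / κ) (hγ : γ = γ₁ / κ)
    :
    (Real.exp ε * b + s₁ - b) * β + s₂ * γ = 1 := by
  have hE : 0 < (Real.exp ε - 1) * b :=
    mul_pos (sub_pos.2 (Real.one_lt_exp_iff.2 hε)) (by linarith)
  have hdiag (t : ℝ) : Real.exp ε * b + t - b = (Real.exp ε - 1) * b + t := by ring
  rw [hdiag, hdiag] at hκ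
  have hκpos : 0 < κ := hκ ▸ blockRR_kappa_pos hE (by linarith) hl0 hs₂
  rw [hdiag, hβ, hγ, mul_div_assoc', mul_div_assoc', ← add_div,
    div_eq_one_iff_eq hκpos.ne', hβ₁, hγ₁, hκ]
  exact blockRR_first_row_numerator_eq _ _ _ _ _

theorem blockRR_first_row_sum
    (ε b s₁ s₂ l : ℝ) (hε : 0 < ε) (hb : 1 ≤ b) (hs₁ : 0 ≤ s₁) (hs₂ : 0 ≤ s₂)
    (hl0 : 0 ≤ l) (hl : l ≤ s₁) (hs : 1 ≤ s₁ + s₂)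
    (s κ β₁ γ₁ β γ : ℝ)
    (hsdef : s = s₁ + s₂)
    (hκ : κ = (Real.exp ε * b + s₁ - b) * (Real.exp ε * b + s₂ - b) - (s₁ - l) * s₂)
    (hβ₁ : β₁ = (Real.exp ε - 1) * b + l * s₂ / s)
    (hγ₁ : γ₁ = ((Real.exp ε - 1) * b + l) - (l / s) * ((Real.exp ε - 1) * b + s₁))
    (hβ : β = β₁ / κ) (hγ : γ = γ₁ / κ)
    :
    (Real.exp ε * b + s₁ - b) * β + s₂ * γ = 1 :=
  blockRR_first_row_sum_general ε b s₁ s₂ l hε hb hs₂ hl0 hs s κ β₁ γ₁ β γ hκ hβ₁ hγ₁ hβ hγ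
end

section
/- The off-block transition probability β is at most the uniform probability: β ≤ 1/s. -/
/-! With `c = (e^ε - 1) b`, the normaliser factors as `κ = c² + s β₁`; hence
`β = β₁ / (c² + s β₁) ≤ β₁ / (s β₁) = 1 / s`. -/

lemma div_add_mul_le_one_div {x y s : ℝ} (hy : 0 ≤ y) (hx : 0 < x) (hs : 0 < s) :
    x / (y + s * x) ≤ 1 / s := by
  rw [div_le_div_iff₀ (by positivity) hs]
  linarith [mul_comm x s]

lemma blockRR_kappa_eq_sq_add_mul (E b s₁ s₂ l : ℝ) (hs : s₁ + s₂ ≠ 0) :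
    (E * b + s₁ - b) * (E * b + s₂ - b) - (s₁ - l) * s₂ =
      ((E - 1) * b) ^ 2 + (s₁ + s₂) * ((E - 1) * b + l * s₂ / (s₁ + s₂)) := by
  field_simp
  ring

theorem blockRR_beta_le_uniform_general
    (ε b s₁ s₂ l : ℝ) (hε : 0 < ε) (hb : 1 ≤ b) (hs₂ : 0 ≤ s₂)
    (hl0 : 0 ≤ l) (hs : 1 ≤ s₁ + s₂)
    (s κ β₁ β : ℝ)
    (hsdef : s = s₁ + s₂)
    (hκ : κ = (Real.exp ε * b + s₁ - b) * (Real.exp ε * b + s₂ - b) - (s₁ - l) * s₂)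
    (hβ₁ : β₁ = (Real.exp ε - 1) * b + l * s₂ / s)
    (hβ : β = β₁ / κ)
    :
    β ≤ 1 / s := by
  subst hsdef hκ hβ₁ hβ
  have hs0 : 0 < s₁ + s₂ := by linarith
  have hc : 0 < (Real.exp ε - 1) * b :=
    mul_pos (sub_pos.2 (Real.one_lt_exp_iff.2 hε)) (by linarith)
  have hβ₁_pos : 0 < (Real.exp ε - 1) * b + l * s₂ / (s₁ + s₂) :=
    add_pos_of_pos_of_nonneg hc (div_nonneg (mul_nonneg hl0 hs₂) hs0.le)
  rw [blockRR_kappa_eq_sq_add_mul _ _ _ _ _ hs0.ne']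
  exact div_add_mul_le_one_div (sq_nonneg _) hβ₁_pos hs0

theorem blockRR_beta_le_uniform
    (ε b s₁ s₂ l : ℝ) (hε : 0 < ε) (hb : 1 ≤ b) (hs₁ : 0 ≤ s₁) (hs₂ : 0 ≤ s₂)
    (hl0 : 0 ≤ l) (hl : l ≤ s₁) (hs : 1 ≤ s₁ + s₂)
    (s κ β₁ γ₁ β γ : ℝ)
    (hsdef : s = s₁ + s₂)
    (hκ : κ = (Real.exp ε * b + s₁ - b) * (Real.exp ε * b + s₂ - b) - (s₁ - l) * s₂)
    (hβ₁ : β₁ = (Real.exp ε - 1) * b + l * s₂ / s)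
    (hγ₁ : γ₁ = ((Real.exp ε - 1) * b + l) - (l / s) * ((Real.exp ε - 1) * b + s₁))
    (hβ : β = β₁ / κ) (hγ : γ = γ₁ / κ)
    :
    β ≤ 1 / s :=
  blockRR_beta_le_uniform_general ε b s₁ s₂ l hε hb hs₂ hl0 hs s κ β₁ β hsdef hκ hβ₁ hβ
end

section
/- Assuming additionally b ≤ s, the uniform probability is at most e^ε times the off-block transition probability: 1/s ≤ e^ε·β. -/
/-!
Write `E = e^ε` and `s = s₁ + s₂`. Expanding, `κ = (E - 1)²b² + (E - 1)bs + ls₂`, while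
`sEβ₁ - κ = (E - 1)²b(s - b) + (E - 1)ls₂`, which is nonnegative once `b ≤ s`. Since `κ > 0`,
this is `1/s ≤ Eβ₁/κ`.
-/

namespace BlockRR

variable {E b s₁ s₂ l : ℝ}

lemma kappa_eq (E b s₁ s₂ l : ℝ) :
    (E * b + s₁ - b) * (E * b + s₂ - b) - (s₁ - l) * s₂
      = (E - 1) ^ 2 * b ^ 2 + (E - 1) * b * (s₁ + s₂) + l * s₂ := by
  ring

lemma kappa_pos (hE : 1 < E) (hb : 0 < b) (hs : 0 < s₁ + s₂) (hl : 0 ≤ l) (hs₂ : 0 ≤ s₂) :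
    0 < (E * b + s₁ - b) * (E * b + s₂ - b) - (s₁ - l) * s₂ := by
  rw [kappa_eq]
  have : 0 < (E - 1) * b * (s₁ + s₂) := by have := sub_pos.2 hE; positivity
  positivity

lemma kappa_le_mul_exp_mul_beta₁ (hE : 1 ≤ E) (hb : 0 ≤ b) (hs : 0 < s₁ + s₂)
    (hl : 0 ≤ l) (hs₂ : 0 ≤ s₂) (hbs : b ≤ s₁ + s₂) :
    (E * b + s₁ - b) * (E * b + s₂ - b) - (s₁ - l) * s₂
      ≤ E * ((E - 1) * b + l * s₂ / (s₁ + s₂)) * (s₁ + s₂) := by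
  have gap : E * ((E - 1) * b + l * s₂ / (s₁ + s₂)) * (s₁ + s₂)
      - ((E * b + s₁ - b) * (E * b + s₂ - b) - (s₁ - l) * s₂)
      = (E - 1) ^ 2 * b * (s₁ + s₂ - b) + (E - 1) * l * s₂ := by
    field_simp
    ring
  have gap_nonneg : 0 ≤ (E - 1) ^ 2 * b * (s₁ + s₂ - b) + (E - 1) * l * s₂ := by
    have := sub_nonneg.2 hE
    have := sub_nonneg.2 hbs
    positivity
  linarith

end BlockRR

open BlockRR in
theorem blockRR_uniform_le_exp_beta_general
    (ε b s₁ s₂ l : ℝ) (hε : 0 < ε) (hb : 1 ≤ b) (hs₂ : 0 ≤ s₂)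
    (hl0 : 0 ≤ l) (hs : 1 ≤ s₁ + s₂)
    (s κ β₁ β : ℝ)
    (hsdef : s = s₁ + s₂)
    (hκ : κ = (Real.exp ε * b + s₁ - b) * (Real.exp ε * b + s₂ - b) - (s₁ - l) * s₂)
    (hβ₁ : β₁ = (Real.exp ε - 1) * b + l * s₂ / s)
    (hβ : β = β₁ / κ)
    (hbs : b ≤ s)
    :
    1 / s ≤ Real.exp ε * β := by
  subst hsdef hκ hβ₁ hβ
  have hE : 1 < Real.exp ε := Real.one_lt_exp_iff.2 hε
  have hs0 : 0 < s₁ + s₂ := by linarith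
  rw [← mul_div_assoc, div_le_div_iff₀ hs0 (kappa_pos hE (by linarith) hs0 hl0 hs₂), one_mul]
  exact kappa_le_mul_exp_mul_beta₁ hE.le (by linarith) hs0 hl0 hs₂ hbs

theorem blockRR_uniform_le_exp_beta
    (ε b s₁ s₂ l : ℝ) (hε : 0 < ε) (hb : 1 ≤ b) (hs₁ : 0 ≤ s₁) (hs₂ : 0 ≤ s₂)
    (hl0 : 0 ≤ l) (hl : l ≤ s₁) (hs : 1 ≤ s₁ + s₂)
    (s κ β₁ γ₁ β γ : ℝ)
    (hsdef : s = s₁ + s₂)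
    (hκ : κ = (Real.exp ε * b + s₁ - b) * (Real.exp ε * b + s₂ - b) - (s₁ - l) * s₂)
    (hβ₁ : β₁ = (Real.exp ε - 1) * b + l * s₂ / s)
    (hγ₁ : γ₁ = ((Real.exp ε - 1) * b + l) - (l / s) * ((Real.exp ε - 1) * b + s₁))
    (hβ : β = β₁ / κ) (hγ : γ = γ₁ / κ)
    (hbs : b ≤ s)
    :
    1 / s ≤ Real.exp ε * β :=
  blockRR_uniform_le_exp_beta_general ε b s₁ s₂ l hε hb hs₂ hl0 hs s κ β₁ β hsdef hκ hβ₁ hβ hbs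
end

section
/- (Lemma 3.1, first part) β is monotonically increasing in the cardinality l: for all real t, t' with 0 ≤ t ≤ t' ≤ s₁, β(t) ≤ β(t'). -/
/-!
With `A = (e^ε - 1) b > 0` one has `κ(t) = A (A + s) + t s₂`, so
`s β(t) = (A s + t s₂) / (A (A + s) + t s₂)`: a fraction `(p + x) / (q + x)` with `p ≤ q`,
evaluated at `x = t s₂`, and such a fraction increases with `x`.
-/

theorem add_div_add_le_add_div_add {α : Type*} [Field α] [LinearOrder α] [IsStrictOrderedRing α]
    {p q x y : α} (hpq : p ≤ q) (hx : 0 < q + x) (hxy : x ≤ y) :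
    (p + x) / (q + x) ≤ (p + y) / (q + y) := by
  rw [div_le_div_iff₀ hx (by linarith)]
  nlinarith [mul_le_mul_of_nonneg_right hpq (sub_nonneg.mpr hxy)]

theorem blockRR_beta_monotone_general
    (ε b s₁ s₂ : ℝ) (hε : 0 < ε) (hb : 1 ≤ b) (hs₂ : 0 ≤ s₂)
    (hs : 1 ≤ s₁ + s₂) (s : ℝ) (hsdef : s = s₁ + s₂)
    (κ β : ℝ → ℝ)
    (hκ : ∀ t, κ t = (Real.exp ε * b + s₁ - b) * (Real.exp ε * b + s₂ - b) - (s₁ - t) * s₂)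
    (hβ : ∀ t, β t = ((Real.exp ε - 1) * b + t * s₂ / s) / κ t)
    :
    ∀ t t' : ℝ, 0 ≤ t → t ≤ t' → t' ≤ s₁ → β t ≤ β t' := by
  intro t t' ht htt' _
  set A := (Real.exp ε - 1) * b
  have hA : 0 < A := mul_pos (by simpa using Real.exp_lt_exp.mpr hε) (by linarith)
  have hs_pos : 0 < s := by linarith
  have hκ_pos : ∀ u, 0 ≤ u → 0 < A * (A + s) + u * s₂ := fun u hu => by positivity
  have hβ_eq : ∀ u, 0 ≤ u → β u = (A * s + u * s₂) / (A * (A + s) + u * s₂) / s := by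
    intro u hu
    have hκu : κ u = A * (A + s) + u * s₂ := by rw [hκ, hsdef]; ring
    rw [hβ, hκu]
    field_simp [(hκ_pos u hu).ne']
  rw [hβ_eq t ht, hβ_eq t' (ht.trans htt')]
  gcongr ?_ / s
  refine add_div_add_le_add_div_add ?_ (hκ_pos t ht) (by gcongr)
  exact mul_le_mul_of_nonneg_left (by linarith) hA.le

theorem blockRR_beta_monotone
    (ε b s₁ s₂ : ℝ) (hε : 0 < ε) (hb : 1 ≤ b) (hs₁ : 0 ≤ s₁) (hs₂ : 0 ≤ s₂)
    (hs : 1 ≤ s₁ + s₂) (s : ℝ) (hsdef : s = s₁ + s₂)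
    (κ β γ : ℝ → ℝ)
    (hκ : ∀ t, κ t = (Real.exp ε * b + s₁ - b) * (Real.exp ε * b + s₂ - b) - (s₁ - t) * s₂)
    (hβ : ∀ t, β t = ((Real.exp ε - 1) * b + t * s₂ / s) / κ t)
    (hγ : ∀ t, γ t = (((Real.exp ε - 1) * b + t) - (t / s) * ((Real.exp ε - 1) * b + s₁)) / κ t)
    :
    ∀ t t' : ℝ, 0 ≤ t → t ≤ t' → t' ≤ s₁ → β t ≤ β t' :=
  blockRR_beta_monotone_general ε b s₁ s₂ hε hb hs₂ hs s hsdef κ β hκ hβ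
end

section
/- (Lemma 3.1, second part) γ is monotonically decreasing in the cardinality l: for all real t, t' with 0 ≤ t ≤ t' ≤ s₁, γ(t') ≤ γ(t). -/
/-!
With `E = (e^ε - 1) b > 0` one has `κ(t) = E² + E s + t s₂` and
`s γ(t) = (E s + (s₂ - E) t) / κ(t)`, a linear-fractional function of `t`. Such a function
`(a + c t) / (d + f t)` is antitone on the half-line where its denominator is positive as
soon as `c d ≤ a f`, and here `a f - c d = s E² (E + s₁) ≥ 0`.
-/

theorem antitoneOn_linearFractional {a c d f : ℝ} (hdet : c * d ≤ a * f) :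
    AntitoneOn (fun t => (a + c * t) / (d + f * t)) {t | 0 < d + f * t} := by
  intro t ht t' ht' htt'
  rw [div_le_div_iff₀ ht' ht]
  nlinarith [mul_le_mul_of_nonneg_left hdet (sub_nonneg.2 htt')]

theorem blockRR_gamma_antitone_general
    (ε b s₁ s₂ : ℝ) (hε : 0 < ε) (hb : 1 ≤ b) (hs₁ : 0 ≤ s₁) (hs₂ : 0 ≤ s₂)
    (hs : 1 ≤ s₁ + s₂) (s : ℝ) (hsdef : s = s₁ + s₂)
    (κ γ : ℝ → ℝ)
    (hκ : ∀ t, κ t = (Real.exp ε * b + s₁ - b) * (Real.exp ε * b + s₂ - b) - (s₁ - t) * s₂)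
    (hγ : ∀ t, γ t = (((Real.exp ε - 1) * b + t) - (t / s) * ((Real.exp ε - 1) * b + s₁)) / κ t)
    :
    ∀ t t' : ℝ, 0 ≤ t → t ≤ t' → t' ≤ s₁ → γ t' ≤ γ t := by
  intro t t' ht htt' _
  set E := (Real.exp ε - 1) * b with hE_def
  have hE : 0 < E := mul_pos (by linarith [Real.add_one_lt_exp hε.ne']) (by linarith)
  have hs0 : 0 < s := by linarith
  have hγ_frac : ∀ u, γ u = (E * s + (s₂ - E) * u) / (s * (E ^ 2 + E * s) + s * s₂ * u) := by
    intro u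
    have hκu : κ u = E ^ 2 + E * s + s₂ * u := by rw [hκ, hsdef, hE_def]; ring
    rw [hγ, hκu, ← mul_div_mul_left _ _ hs0.ne']
    congr 1
    · field_simp
      rw [hsdef]
      ring
    · ring
  have hdet : (s₂ - E) * (s * (E ^ 2 + E * s)) ≤ E * s * (s * s₂) := by
    have : E * s * (s * s₂) - (s₂ - E) * (s * (E ^ 2 + E * s)) = s * E ^ 2 * (E + s₁) := by
      rw [hsdef]; ring
    linarith [show 0 ≤ s * E ^ 2 * (E + s₁) by positivity]
  have hmem : ∀ u, 0 ≤ u → 0 < s * (E ^ 2 + E * s) + s * s₂ * u := fun u hu => by positivity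
  rw [hγ_frac, hγ_frac]
  exact antitoneOn_linearFractional hdet (hmem t ht) (hmem t' (ht.trans htt')) htt'

theorem blockRR_gamma_antitone
    (ε b s₁ s₂ : ℝ) (hε : 0 < ε) (hb : 1 ≤ b) (hs₁ : 0 ≤ s₁) (hs₂ : 0 ≤ s₂)
    (hs : 1 ≤ s₁ + s₂) (s : ℝ) (hsdef : s = s₁ + s₂)
    (κ β γ : ℝ → ℝ)
    (hκ : ∀ t, κ t = (Real.exp ε * b + s₁ - b) * (Real.exp ε * b + s₂ - b) - (s₁ - t) * s₂)
    (hβ : ∀ t, β t = ((Real.exp ε - 1) * b + t * s₂ / s) / κ t)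
    (hγ : ∀ t, γ t = (((Real.exp ε - 1) * b + t) - (t / s) * ((Real.exp ε - 1) * b + s₁)) / κ t)
    :
    ∀ t t' : ℝ, 0 ≤ t → t ≤ t' → t' ≤ s₁ → γ t' ≤ γ t :=
  blockRR_gamma_antitone_general ε b s₁ s₂ hε hb hs₁ hs₂ hs s hsdef κ γ hκ hγ
end

section
/- (Lemma 3.1, max_l γ = min_l β) For all real t, t' with 0 ≤ t ≤ s₁ and 0 ≤ t' ≤ s₁, γ(t) ≤ β(t'); in particular the maximum of γ over l equals the minimum of β over l, both being attained at l = 0. -/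
/-!
Write `c = (e^ε - 1) b > 0` and `s = s₁ + s₂`. Then `κ(t) = c (c + s) + t s₂`, and both `γ` and `β`
take the value `1 / (c + s)` at `t = 0`. Moreover
`1/(c+s) - γ(t) = t c (c + s₁) / (s (c + s) κ(t))` and `β(t) - 1/(c+s) = t c s₂ / (s (c + s) κ(t))`,
both nonnegative for `t ≥ 0`, so `γ ≤ 1/(c+s) ≤ β` everywhere on `[0, s₁]`.
-/

section

variable {c s₁ s₂ t : ℝ}

lemma blockRR_kappa_eq {E b : ℝ} (hc : c = (E - 1) * b) :
    (E * b + s₁ - b) * (E * b + s₂ - b) - (s₁ - t) * s₂ = c * (c + (s₁ + s₂)) + t * s₂ := by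
  rw [hc]
  ring

lemma blockRR_kappa_pos_s10 (hc : 0 < c) (hs₁ : 0 ≤ s₁) (hs₂ : 0 ≤ s₂) (ht : 0 ≤ t) :
    0 < c * (c + (s₁ + s₂)) + t * s₂ := by
  positivity

lemma blockRR_inv_sub_gamma (hc : 0 < c) (hs₁ : 0 ≤ s₁) (hs₂ : 0 ≤ s₂) (hs : 0 < s₁ + s₂)
    (ht : 0 ≤ t) :
    (c + (s₁ + s₂))⁻¹ - (c + t - t / (s₁ + s₂) * (c + s₁)) / (c * (c + (s₁ + s₂)) + t * s₂) =
      t * c * (c + s₁) / ((s₁ + s₂) * (c + (s₁ + s₂)) * (c * (c + (s₁ + s₂)) + t * s₂)) := by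
  have := blockRR_kappa_pos_s10 hc hs₁ hs₂ ht
  field_simp
  ring

lemma blockRR_beta_sub_inv (hc : 0 < c) (hs₁ : 0 ≤ s₁) (hs₂ : 0 ≤ s₂) (hs : 0 < s₁ + s₂)
    (ht : 0 ≤ t) :
    (c + t * s₂ / (s₁ + s₂)) / (c * (c + (s₁ + s₂)) + t * s₂) - (c + (s₁ + s₂))⁻¹ =
      t * c * s₂ / ((s₁ + s₂) * (c + (s₁ + s₂)) * (c * (c + (s₁ + s₂)) + t * s₂)) := by
  have := blockRR_kappa_pos_s10 hc hs₁ hs₂ ht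
  field_simp
  ring

lemma blockRR_gamma_le_inv (hc : 0 < c) (hs₁ : 0 ≤ s₁) (hs₂ : 0 ≤ s₂) (hs : 0 < s₁ + s₂)
    (ht : 0 ≤ t) :
    (c + t - t / (s₁ + s₂) * (c + s₁)) / (c * (c + (s₁ + s₂)) + t * s₂) ≤ (c + (s₁ + s₂))⁻¹ := by
  rw [← sub_nonneg, blockRR_inv_sub_gamma hc hs₁ hs₂ hs ht]
  positivity

lemma blockRR_inv_le_beta (hc : 0 < c) (hs₁ : 0 ≤ s₁) (hs₂ : 0 ≤ s₂) (hs : 0 < s₁ + s₂)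
    (ht : 0 ≤ t) :
    (c + (s₁ + s₂))⁻¹ ≤ (c + t * s₂ / (s₁ + s₂)) / (c * (c + (s₁ + s₂)) + t * s₂) := by
  rw [← sub_nonneg, blockRR_beta_sub_inv hc hs₁ hs₂ hs ht]
  positivity

end

theorem blockRR_max_gamma_eq_min_beta
    (ε b s₁ s₂ : ℝ) (hε : 0 < ε) (hb : 1 ≤ b) (hs₁ : 0 ≤ s₁) (hs₂ : 0 ≤ s₂)
    (hs : 1 ≤ s₁ + s₂) (s : ℝ) (hsdef : s = s₁ + s₂)
    (κ β γ : ℝ → ℝ)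
    (hκ : ∀ t, κ t = (Real.exp ε * b + s₁ - b) * (Real.exp ε * b + s₂ - b) - (s₁ - t) * s₂)
    (hβ : ∀ t, β t = ((Real.exp ε - 1) * b + t * s₂ / s) / κ t)
    (hγ : ∀ t, γ t = (((Real.exp ε - 1) * b + t) - (t / s) * ((Real.exp ε - 1) * b + s₁)) / κ t)
    :
    (∀ t t' : ℝ, 0 ≤ t → t ≤ s₁ → 0 ≤ t' → t' ≤ s₁ → γ t ≤ β t') ∧ (∀ t : ℝ, 0 ≤ t → t ≤ s₁ → γ t ≤ γ 0) ∧ (∀ t : ℝ, 0 ≤ t → t ≤ s₁ → β 0 ≤ β t) ∧ γ 0 = β 0 := by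
  subst hsdef
  set c := (Real.exp ε - 1) * b with hc_def
  have hc : 0 < c := mul_pos (sub_pos.mpr (Real.one_lt_exp_iff.mpr hε)) (by linarith)
  have hs' : 0 < s₁ + s₂ := by linarith
  have hγ_le : ∀ t, 0 ≤ t → γ t ≤ (c + (s₁ + s₂))⁻¹ := fun t ht => by
    rw [hγ, hκ, blockRR_kappa_eq hc_def]
    exact blockRR_gamma_le_inv hc hs₁ hs₂ hs' ht
  have hβ_ge : ∀ t, 0 ≤ t → (c + (s₁ + s₂))⁻¹ ≤ β t := fun t ht => by
    rw [hβ, hκ, blockRR_kappa_eq hc_def]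
    exact blockRR_inv_le_beta hc hs₁ hs₂ hs' ht
  have hγ₀ : γ 0 = (c + (s₁ + s₂))⁻¹ := by
    rw [hγ, hκ, blockRR_kappa_eq hc_def]
    field_simp
    ring
  have hβ₀ : β 0 = (c + (s₁ + s₂))⁻¹ := by
    rw [hβ, hκ, blockRR_kappa_eq hc_def]
    field_simp
    ring
  exact ⟨fun t t' ht _ ht' _ => (hγ_le t ht).trans (hβ_ge t' ht'),
    fun t ht _ => hγ₀ ▸ hγ_le t ht, fun t ht _ => hβ₀ ▸ hβ_ge t ht, hγ₀.trans hβ₀.symm⟩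
end

section
/- Each row of the BlockRR transition function is a probability distribution over the privatized labels: for every y ∈ S, the sum over ỹ ∈ S̃ of p(y, ỹ) equals 1. -/
/-! Every row of `p` is constant on a few blocks of `T₁ ∪ T₂` (`B y`, `T₁ \ B y`, `T₂` for
`y ∈ S₁`; `Δ`, `T₁ \ Δ`, `B y`, `T₂ \ B y` for `y ∈ S₂`), so a row sum is a weighted count
of block sizes, linear in `(β, γ)`. The two resulting equations
`(e^ε b + s₁ - b) β + s₂ γ = 1` and `(s₁ - l) β + (e^ε b + s₂ - b) γ = 1 - l / s`
form a `2 × 2` system of determinant `κ > 0`, and `β`, `γ` are its solution by Cramer's rule. -/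

open Finset

namespace BlockRR

variable {α : Type*} [DecidableEq α]

theorem ite_mem_of_subset {U T : Finset α} (h : U ⊆ T) {β : Type*} (a c d : β) (z : α) :
    (if z ∈ U then a else if z ∈ T then c else d) =
      if z ∈ T then (if z ∈ U then a else c) else d := by
  by_cases hzU : z ∈ U
  · simp [hzU, h hzU]
  · simp [hzU]

theorem sum_union_ite_mem_left {M : Type*} [AddCommMonoid M] {T₁ T₂ : Finset α}
    (hT : Disjoint T₁ T₂) (f g : α → M) :
    ∑ z ∈ T₁ ∪ T₂, (if z ∈ T₁ then f z else g z) = ∑ z ∈ T₁, f z + ∑ z ∈ T₂, g z := by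
  rw [sum_union hT, sum_ite_of_true (fun _ hz ↦ hz),
    sum_ite_of_false (fun _ hz ↦ disjoint_right.mp hT hz)]

theorem sum_ite_mem_of_subset {R : Type*} [Ring R] {U T : Finset α} (h : U ⊆ T) (a c : R) :
    ∑ z ∈ T, (if z ∈ U then a else c) = #U * a + (#T - #U) * c := by
  rw [← sum_sdiff h, sum_ite_of_false (fun _ hz ↦ (mem_sdiff.mp hz).2),
    sum_ite_of_true (fun _ hz ↦ hz), sum_const, sum_const, nsmul_eq_mul, nsmul_eq_mul,
    cast_card_sdiff h, add_comm]

noncomputable def kappa (e b l s₁ s₂ : ℝ) : ℝ :=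
  (e * b + s₁ - b) * (e * b + s₂ - b) - (s₁ - l) * s₂

noncomputable def beta (e b l s₁ s₂ : ℝ) : ℝ :=
  ((e - 1) * b + l * s₂ / (s₁ + s₂)) / kappa e b l s₁ s₂

noncomputable def gamma (e b l s₁ s₂ : ℝ) : ℝ :=
  (((e - 1) * b + l) - (l / (s₁ + s₂)) * ((e - 1) * b + s₁)) / kappa e b l s₁ s₂

variable {e b l s₁ s₂ : ℝ}

theorem kappa_pos_s13 (hx : 0 < (e - 1) * b) (hs : 0 < s₁ + s₂) (hl : 0 ≤ l) (hs₂ : 0 ≤ s₂) :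
    0 < kappa e b l s₁ s₂ := by
  have hκ : kappa e b l s₁ s₂ = ((e - 1) * b) ^ 2 + (e - 1) * b * (s₁ + s₂) + l * s₂ := by
    unfold kappa; ring
  rw [hκ]
  positivity

theorem first_row_mass (hs : s₁ + s₂ ≠ 0) (hκ : kappa e b l s₁ s₂ ≠ 0) :
    b * (e * beta e b l s₁ s₂) + (s₁ - b) * beta e b l s₁ s₂ + s₂ * gamma e b l s₁ s₂ = 1 := by
  unfold beta gamma
  field_simp
  unfold kappa
  ring

theorem second_row_mass (hs : s₁ + s₂ ≠ 0) (hκ : kappa e b l s₁ s₂ ≠ 0) :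
    l * (1 / (s₁ + s₂)) + (s₁ - l) * beta e b l s₁ s₂ + (b * (e * gamma e b l s₁ s₂)
      + (s₂ - b) * gamma e b l s₁ s₂) = 1 := by
  unfold beta gamma
  field_simp
  unfold kappa
  ring

end BlockRR

theorem blockRR_row_sum_one_general {α : Type*} [DecidableEq α]
    (S₁ S₂ T₁ T₂ Δ : Finset α)
    (hT : Disjoint T₁ T₂)
    (hTcard : 1 ≤ (T₁ ∪ T₂).card)
    (ε : ℝ) (hε : 0 < ε) (b l : ℕ) (hb : 1 ≤ b)
    (B : α → Finset α)
    (hB₁ : ∀ y ∈ S₁, B y ⊆ T₁ ∧ (B y).card = b)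
    (hB₂ : ∀ y ∈ S₂, B y ⊆ T₂ ∧ (B y).card = b)
    (hΔ : Δ ⊆ T₁) (hΔcard : Δ.card = l)
    (s₁ s₂ s κ β γ : ℝ)
    (hs₁ : s₁ = T₁.card) (hs₂ : s₂ = T₂.card) (hsdef : s = s₁ + s₂)
    (hκ : κ = (Real.exp ε * b + s₁ - b) * (Real.exp ε * b + s₂ - b) - (s₁ - l) * s₂)
    (hβ : β = ((Real.exp ε - 1) * b + l * s₂ / s) / κ)
    (hγ : γ = (((Real.exp ε - 1) * b + l) - (l / s) * ((Real.exp ε - 1) * b + s₁)) / κ)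
    (p : α → α → ℝ)
    (hp : ∀ y ∈ S₁ ∪ S₂, ∀ z ∈ T₁ ∪ T₂,
      p y z = if y ∈ S₁ then
          (if z ∈ B y then Real.exp ε * β else if z ∈ T₁ then β else γ)
        else
          (if z ∈ Δ then 1 / s else if z ∈ T₁ then β
            else if z ∈ B y then Real.exp ε * γ else γ)) :
    ∀ y ∈ S₁ ∪ S₂, ∑ z ∈ T₁ ∪ T₂, p y z = 1 := by
  have hs : 0 < s₁ + s₂ := by
    have : ((T₁ ∪ T₂).card : ℝ) ≤ s₁ + s₂ := by
      rw [hs₁, hs₂]; exact_mod_cast card_union_le T₁ T₂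
    linarith [(Nat.one_le_cast (α := ℝ)).mpr hTcard]
  have hx : 0 < (Real.exp ε - 1) * (b : ℝ) :=
    mul_pos (by linarith [Real.add_one_lt_exp hε.ne']) (by exact_mod_cast hb)
  have hκ0 := (BlockRR.kappa_pos_s13 hx hs l.cast_nonneg (hs₂ ▸ (#T₂).cast_nonneg)).ne'
  subst hsdef
  obtain rfl : β = BlockRR.beta (Real.exp ε) b l s₁ s₂ := by rw [hβ, hκ]; rfl
  obtain rfl : γ = BlockRR.gamma (Real.exp ε) b l s₁ s₂ := by rw [hγ, hκ]; rfl
  intro y hy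
  rw [sum_congr rfl (hp y hy)]
  by_cases hy₁ : y ∈ S₁
  · obtain ⟨hBT, hBcard⟩ := hB₁ y hy₁
    simp only [if_pos hy₁, BlockRR.ite_mem_of_subset hBT, BlockRR.sum_union_ite_mem_left hT,
      BlockRR.sum_ite_mem_of_subset hBT, sum_const, nsmul_eq_mul, hBcard, ← hs₁, ← hs₂]
    exact BlockRR.first_row_mass hs.ne' hκ0
  · obtain ⟨hBT, hBcard⟩ := hB₂ y ((mem_union.mp hy).resolve_left hy₁)
    simp only [if_neg hy₁, BlockRR.ite_mem_of_subset hΔ, BlockRR.sum_union_ite_mem_left hT,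
      BlockRR.sum_ite_mem_of_subset hΔ, BlockRR.sum_ite_mem_of_subset hBT, hBcard, hΔcard,
      ← hs₁, ← hs₂]
    exact BlockRR.second_row_mass hs.ne' hκ0

/-- Each row of the BlockRR transition function sums to 1 over the privatized labels. -/
theorem blockRR_row_sum_one {α : Type*} [DecidableEq α]
    (S₁ S₂ T₁ T₂ Δ : Finset α)
    (hS : Disjoint S₁ S₂) (hT : Disjoint T₁ T₂)
    (hTcard : 1 ≤ (T₁ ∪ T₂).card)
    (ε : ℝ) (hε : 0 < ε) (b l : ℕ) (hb : 1 ≤ b)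
    (B : α → Finset α)
    (hB₁ : ∀ y ∈ S₁, B y ⊆ T₁ ∧ (B y).card = b)
    (hB₂ : ∀ y ∈ S₂, B y ⊆ T₂ ∧ (B y).card = b)
    (hΔ : Δ ⊆ T₁) (hΔcard : Δ.card = l)
    (s₁ s₂ s κ β γ : ℝ)
    (hs₁ : s₁ = T₁.card) (hs₂ : s₂ = T₂.card) (hsdef : s = s₁ + s₂)
    (hκ : κ = (Real.exp ε * b + s₁ - b) * (Real.exp ε * b + s₂ - b) - (s₁ - l) * s₂)
    (hβ : β = ((Real.exp ε - 1) * b + l * s₂ / s) / κ)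
    (hγ : γ = (((Real.exp ε - 1) * b + l) - (l / s) * ((Real.exp ε - 1) * b + s₁)) / κ)
    (p : α → α → ℝ)
    (hp : ∀ y ∈ S₁ ∪ S₂, ∀ z ∈ T₁ ∪ T₂,
      p y z = if y ∈ S₁ then
          (if z ∈ B y then Real.exp ε * β else if z ∈ T₁ then β else γ)
        else
          (if z ∈ Δ then 1 / s else if z ∈ T₁ then β
            else if z ∈ B y then Real.exp ε * γ else γ)) :
    ∀ y ∈ S₁ ∪ S₂, ∑ z ∈ T₁ ∪ T₂, p y z = 1 :=
  blockRR_row_sum_one_general S₁ S₂ T₁ T₂ Δ hT hTcard ε hε b l hb B hB₁ hB₂ hΔ hΔcard s₁ s₂ s κ β γ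
    hs₁ hs₂ hsdef hκ hβ hγ p hp
end

section
/- The identity e^ε·β₁·s − κ = (e^ε − 1)²·b·(s − b) + (e^ε − 1)·l·s₂ holds; consequently, when b ≤ s this quantity is nonnegative, which is the key step showing 1/s ≤ e^ε·β in the proof of Theorem 3.2. -/
theorem blockRR_gap_eq {K : Type*} [Field K] (x b s₁ s₂ l : K) (hs : s₁ + s₂ ≠ 0) :
    x * ((x - 1) * b + l * s₂ / (s₁ + s₂)) * (s₁ + s₂)
        - ((x * b + s₁ - b) * (x * b + s₂ - b) - (s₁ - l) * s₂)
      = (x - 1) ^ 2 * b * (s₁ + s₂ - b) + (x - 1) * l * s₂ := by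
  field_simp
  ring

theorem blockRR_key_identity_general
    (ε b s₁ s₂ l : ℝ) (hε : 0 < ε) (hb : 1 ≤ b) (hs₂ : 0 ≤ s₂)
    (hl0 : 0 ≤ l) (hs : 1 ≤ s₁ + s₂)
    (s κ β₁ : ℝ)
    (hsdef : s = s₁ + s₂)
    (hκ : κ = (Real.exp ε * b + s₁ - b) * (Real.exp ε * b + s₂ - b) - (s₁ - l) * s₂)
    (hβ₁ : β₁ = (Real.exp ε - 1) * b + l * s₂ / s)
    :
    Real.exp ε * β₁ * s - κ = (Real.exp ε - 1) ^ 2 * b * (s - b) + (Real.exp ε - 1) * l * s₂ ∧ (b ≤ s → 0 ≤ Real.exp ε * β₁ * s - κ) := by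
  subst hsdef hκ hβ₁
  have hid := blockRR_gap_eq (Real.exp ε) b s₁ s₂ l (by linarith)
  refine ⟨hid, fun hbs => hid ▸ ?_⟩
  have hexp : 0 ≤ Real.exp ε - 1 := sub_nonneg.2 (Real.one_le_exp hε.le)
  exact add_nonneg
    (mul_nonneg (mul_nonneg (sq_nonneg _) (by linarith)) (sub_nonneg.2 hbs))
    (mul_nonneg (mul_nonneg hexp hl0) hs₂)

theorem blockRR_key_identity
    (ε b s₁ s₂ l : ℝ) (hε : 0 < ε) (hb : 1 ≤ b) (hs₁ : 0 ≤ s₁) (hs₂ : 0 ≤ s₂)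
    (hl0 : 0 ≤ l) (hl : l ≤ s₁) (hs : 1 ≤ s₁ + s₂)
    (s κ β₁ γ₁ β γ : ℝ)
    (hsdef : s = s₁ + s₂)
    (hκ : κ = (Real.exp ε * b + s₁ - b) * (Real.exp ε * b + s₂ - b) - (s₁ - l) * s₂)
    (hβ₁ : β₁ = (Real.exp ε - 1) * b + l * s₂ / s)
    (hγ₁ : γ₁ = ((Real.exp ε - 1) * b + l) - (l / s) * ((Real.exp ε - 1) * b + s₁))
    (hβ : β = β₁ / κ) (hγ : γ = γ₁ / κ)
    :
    Real.exp ε * β₁ * s - κ = (Real.exp ε - 1) ^ 2 * b * (s - b) + (Real.exp ε - 1) * l * s₂ ∧ (b ≤ s → 0 ≤ Real.exp ε * β₁ * s - κ) :=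
  blockRR_key_identity_general ε b s₁ s₂ l hε hb hs₂ hl0 hs s κ β₁ hsdef hκ hβ₁
end

section
/- (Feasibility bound for minority labels, inequality (4)) For every y ∈ S₂, any feasible conditional distribution p for BlockRR's optimization problem satisfies ∑_{ỹ ∈ B(y)} p(y, ỹ) + e^{−ε} · ∑_{ỹ ∈ S̃ \ (B(y) ∪ Δ)} p(ỹ, ỹ) + |Δ|/|S̃| ≤ 1. -/
/-!
Split the row `p y` of a minority label over `S̃ = B(y) ⊔ Δ ⊔ rest`: it sums to `1`, its mass on
`Δ` is `|Δ|/|S̃|` by the BlockRR constraint, and on the rest the ε-DP constraint applied to the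
pair `(z, y)` gives `p(y, z) ≥ e^{-ε} p(z, z)`.
-/

open Finset

lemma Real.exp_neg_mul_le_of_le_exp_mul {a b ε : ℝ} (h : a ≤ Real.exp ε * b) :
    Real.exp (-ε) * a ≤ b := by
  calc Real.exp (-ε) * a ≤ Real.exp (-ε) * (Real.exp ε * b) :=
        mul_le_mul_of_nonneg_left h (Real.exp_nonneg _)
    _ = b := by rw [← mul_assoc, ← Real.exp_add, neg_add_cancel, Real.exp_zero, one_mul]

lemma Real.exp_neg_mul_sum_le_sum {ι : Type*} {s : Finset ι} {f g : ι → ℝ} {ε : ℝ}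
    (h : ∀ i ∈ s, f i ≤ Real.exp ε * g i) :
    Real.exp (-ε) * ∑ i ∈ s, f i ≤ ∑ i ∈ s, g i := by
  rw [mul_sum]
  exact sum_le_sum fun i hi => Real.exp_neg_mul_le_of_le_exp_mul (h i hi)

lemma Finset.sum_add_sum_add_sum_sdiff_union {ι M : Type*} [DecidableEq ι] [AddCommMonoid M]
    {s t u : Finset ι} (hs : s ⊆ u) (ht : t ⊆ u) (hst : Disjoint s t) (f : ι → M) :
    ∑ i ∈ s, f i + ∑ i ∈ t, f i + ∑ i ∈ u \ (s ∪ t), f i = ∑ i ∈ u, f i := by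
  rw [← sum_union hst, add_comm, sum_sdiff (union_subset hs ht)]

theorem blockRR_feasibility_minority_general {α : Type*} [DecidableEq α]
    (S₁ S₂ T₁ T₂ Δ : Finset α)
    (hsub : T₁ ∪ T₂ ⊆ S₁ ∪ S₂)
    (hΔ : Δ ⊆ T₁)
    (ε : ℝ)
    (B : α → Finset α)
    (hB : ∀ y ∈ S₂, B y ⊆ T₁ ∪ T₂ ∧ Disjoint (B y) Δ)
    (p : α → α → ℝ)
    (hsum : ∀ y ∈ S₁ ∪ S₂, ∑ z ∈ T₁ ∪ T₂, p y z = 1)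
    (hdp : ∀ y ∈ S₁ ∪ S₂, ∀ y' ∈ S₁ ∪ S₂, ∀ z ∈ T₁ ∪ T₂,
      p y z ≤ Real.exp ε * p y' z)
    (hΔp : ∀ y ∈ S₂, ∀ z ∈ Δ, p y z = 1 / (T₁ ∪ T₂).card) :
    ∀ y ∈ S₂,
      ∑ z ∈ B y, p y z
        + Real.exp (-ε) * ∑ z ∈ (T₁ ∪ T₂) \ (B y ∪ Δ), p z z
        + (Δ.card : ℝ) / (T₁ ∪ T₂).card ≤ 1 := by
  intro y hy
  have hyS : y ∈ S₁ ∪ S₂ := mem_union_right _ hy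
  obtain ⟨hBT, hBΔ⟩ := hB y hy
  have hsplit := sum_add_sum_add_sum_sdiff_union hBT (hΔ.trans subset_union_left) hBΔ (p y)
  have hΔsum : ∑ z ∈ Δ, p y z = (Δ.card : ℝ) / (T₁ ∪ T₂).card := by
    rw [sum_congr rfl (hΔp y hy), sum_const, nsmul_eq_mul, mul_one_div]
  have hrest : Real.exp (-ε) * ∑ z ∈ (T₁ ∪ T₂) \ (B y ∪ Δ), p z z
      ≤ ∑ z ∈ (T₁ ∪ T₂) \ (B y ∪ Δ), p y z :=
    Real.exp_neg_mul_sum_le_sum fun z hz =>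
      have hzT := (mem_sdiff.mp hz).1
      hdp z (hsub hzT) y hyS z hzT
  linarith [hsum y hyS]

/-- Feasibility bound (inequality (4)) for minority labels `y ∈ S₂`. -/
theorem blockRR_feasibility_minority {α : Type*} [DecidableEq α]
    (S₁ S₂ T₁ T₂ Δ : Finset α)
    (hS : Disjoint S₁ S₂) (hT : Disjoint T₁ T₂)
    (hsub : T₁ ∪ T₂ ⊆ S₁ ∪ S₂) (hTcard : 1 ≤ (T₁ ∪ T₂).card)
    (hΔ : Δ ⊆ T₁)
    (ε : ℝ) (hε : 0 < ε)
    (B : α → Finset α)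
    (hB : ∀ y ∈ S₂, B y ⊆ T₁ ∪ T₂ ∧ Disjoint (B y) Δ)
    (p : α → α → ℝ)
    (hnn : ∀ y ∈ S₁ ∪ S₂, ∀ z ∈ T₁ ∪ T₂, 0 ≤ p y z)
    (hsum : ∀ y ∈ S₁ ∪ S₂, ∑ z ∈ T₁ ∪ T₂, p y z = 1)
    (hdp : ∀ y ∈ S₁ ∪ S₂, ∀ y' ∈ S₁ ∪ S₂, ∀ z ∈ T₁ ∪ T₂,
      p y z ≤ Real.exp ε * p y' z)
    (hΔp : ∀ y ∈ S₂, ∀ z ∈ Δ, p y z = 1 / (T₁ ∪ T₂).card) :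
    ∀ y ∈ S₂,
      ∑ z ∈ B y, p y z
        + Real.exp (-ε) * ∑ z ∈ (T₁ ∪ T₂) \ (B y ∪ Δ), p z z
        + (Δ.card : ℝ) / (T₁ ∪ T₂).card ≤ 1 :=
  blockRR_feasibility_minority_general S₁ S₂ T₁ T₂ Δ hsub hΔ ε B hB p hsum hdp hΔp
end

section
/- (Strict version of Lemma 3.1, first part) If s₂ ≥ 1, then β is strictly increasing in the cardinality l: for all real t, t' with 0 ≤ t < t' ≤ s₁, β(t) < β(t'). -/
/-!
Write `A = (e^ε - 1) b > 0` and `x(t) = A s + t s₂`. Then `κ(t) = A² + x(t)` and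
`β(t) = x(t) / (s (A² + x(t)))`. The map `x ↦ x / (A² + x)` is strictly increasing on
`A² + x > 0`, and `x(t)` is strictly increasing in `t` because `s₂ > 0`.
-/

theorem div_add_lt_div_add_of_lt {c x y : ℝ} (hc : 0 < c) (hcx : 0 < c + x) (hxy : x < y) :
    x / (c + x) < y / (c + y) := by
  have hcy : 0 < c + y := by linarith
  rw [div_lt_div_iff₀ hcx hcy]
  nlinarith [mul_lt_mul_of_pos_left hxy hc]

theorem add_div_div_eq_mul_add_div_div {a u k s : ℝ} (hs : s ≠ 0) :
    (a + u / s) / k = (a * s + u) / k / s := by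
  field_simp

theorem blockRR_beta_strictMono_general
    (ε b s₁ s₂ : ℝ) (hε : 0 < ε) (hb : 1 ≤ b)
    (hs : 1 ≤ s₁ + s₂) (s : ℝ) (hsdef : s = s₁ + s₂)
    (κ β : ℝ → ℝ)
    (hκ : ∀ t, κ t = (Real.exp ε * b + s₁ - b) * (Real.exp ε * b + s₂ - b) - (s₁ - t) * s₂)
    (hβ : ∀ t, β t = ((Real.exp ε - 1) * b + t * s₂ / s) / κ t)
    (hs₂1 : 1 ≤ s₂)
    :
    ∀ t t' : ℝ, 0 ≤ t → t < t' → t' ≤ s₁ → β t < β t' := by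
  intro t t' ht htt' _
  set A := (Real.exp ε - 1) * b
  have hA : 0 < A := mul_pos (by linarith [Real.add_one_lt_exp hε.ne']) (by linarith)
  have hs0 : 0 < s := by linarith
  have hκA : ∀ u, κ u = A ^ 2 + (A * s + u * s₂) := fun u => by rw [hκ, hsdef]; ring
  rw [hβ, hβ, hκA, hκA, add_div_div_eq_mul_add_div_div hs0.ne',
    add_div_div_eq_mul_add_div_div hs0.ne']
  refine div_lt_div_of_pos_right (div_add_lt_div_add_of_lt (by positivity) ?_ ?_) hs0
  · have : 0 ≤ t * s₂ := by positivity
    positivity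
  · gcongr

theorem blockRR_beta_strictMono
    (ε b s₁ s₂ : ℝ) (hε : 0 < ε) (hb : 1 ≤ b) (hs₁ : 0 ≤ s₁) (hs₂ : 0 ≤ s₂)
    (hs : 1 ≤ s₁ + s₂) (s : ℝ) (hsdef : s = s₁ + s₂)
    (κ β γ : ℝ → ℝ)
    (hκ : ∀ t, κ t = (Real.exp ε * b + s₁ - b) * (Real.exp ε * b + s₂ - b) - (s₁ - t) * s₂)
    (hβ : ∀ t, β t = ((Real.exp ε - 1) * b + t * s₂ / s) / κ t)
    (hγ : ∀ t, γ t = (((Real.exp ε - 1) * b + t) - (t / s) * ((Real.exp ε - 1) * b + s₁)) / κ t)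
    (hs₂1 : 1 ≤ s₂)
    :
    ∀ t t' : ℝ, 0 ≤ t → t < t' → t' ≤ s₁ → β t < β t' :=
  blockRR_beta_strictMono_general ε b s₁ s₂ hε hb hs s hsdef κ β hκ hβ hs₂1
end

section
/- (Strict version of Lemma 3.1, second part) γ is strictly decreasing in the cardinality l: for all real t, t' with 0 ≤ t < t' ≤ s₁, γ(t') < γ(t). -/
/-!
Write `A = (e^ε - 1) b > 0`. Since `s = s₁ + s₂`, `κ(t) = A² + A s + s₂ t` and
`γ(t) = (A + c t) / κ(t)` with `c = (s₂ - A) / s`, so `γ` is a Möbius function of `t` with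
positive denominator on `[0, s₁]`. Such a function is strictly decreasing exactly when its
determinant `c (A² + A s) - A s₂ = -A² (A + s₁) / s` is negative.
-/

theorem div_affine_lt_div_affine {K : Type*} [Field K] [LinearOrder K] [IsStrictOrderedRing K]
    {p q r w x y : K} (hx : 0 < r + w * x) (hy : 0 < r + w * y)
    (hxy : x < y) (hdet : q * r - p * w < 0) :
    (p + q * y) / (r + w * y) < (p + q * x) / (r + w * x) := by
  rw [div_lt_div_iff₀ hy hx]
  have cross :
      (p + q * x) * (r + w * y) - (p + q * y) * (r + w * x) = (x - y) * (q * r - p * w) := by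
    ring
  linarith [mul_pos_of_neg_of_neg (sub_neg.2 hxy) hdet]

theorem blockRR_gamma_strictAnti_general
    (ε b s₁ s₂ : ℝ) (hε : 0 < ε) (hb : 1 ≤ b) (hs₂ : 0 ≤ s₂)
    (s : ℝ) (hsdef : s = s₁ + s₂)
    (κ γ : ℝ → ℝ)
    (hκ : ∀ t, κ t = (Real.exp ε * b + s₁ - b) * (Real.exp ε * b + s₂ - b) - (s₁ - t) * s₂)
    (hγ : ∀ t, γ t = (((Real.exp ε - 1) * b + t) - (t / s) * ((Real.exp ε - 1) * b + s₁)) / κ t)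
    :
    ∀ t t' : ℝ, 0 ≤ t → t < t' → t' ≤ s₁ → γ t' < γ t := by
  intro t t' ht htt' ht's
  have hs : 0 < s := by linarith
  set A := (Real.exp ε - 1) * b with hA_def
  have hA : 0 < A := mul_pos (by linarith [Real.add_one_lt_exp hε.ne']) (by linarith)
  have hκA : ∀ u, κ u = A ^ 2 + A * s + s₂ * u := fun u => by rw [hκ, hsdef, hA_def]; ring
  have hγA : ∀ u, γ u = (A + (s₂ - A) / s * u) / (A ^ 2 + A * s + s₂ * u) := fun u => by
    rw [hγ, hκA]
    congr 1
    field_simp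
    rw [hsdef]
    ring
  have hdet : (s₂ - A) / s * (A ^ 2 + A * s) - A * s₂ = -(A ^ 2 * (A + s₁) / s) := by
    field_simp
    rw [hsdef]
    ring
  have ht' : 0 ≤ t' := by linarith
  rw [hγA, hγA]
  refine div_affine_lt_div_affine (by positivity) (by positivity) htt' ?_
  rw [hdet, neg_neg_iff_pos]
  have : 0 < A + s₁ := by linarith
  positivity

theorem blockRR_gamma_strictAnti
    (ε b s₁ s₂ : ℝ) (hε : 0 < ε) (hb : 1 ≤ b) (hs₁ : 0 ≤ s₁) (hs₂ : 0 ≤ s₂)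
    (hs : 1 ≤ s₁ + s₂) (s : ℝ) (hsdef : s = s₁ + s₂)
    (κ β γ : ℝ → ℝ)
    (hκ : ∀ t, κ t = (Real.exp ε * b + s₁ - b) * (Real.exp ε * b + s₂ - b) - (s₁ - t) * s₂)
    (hβ : ∀ t, β t = ((Real.exp ε - 1) * b + t * s₂ / s) / κ t)
    (hγ : ∀ t, γ t = (((Real.exp ε - 1) * b + t) - (t / s) * ((Real.exp ε - 1) * b + s₁)) / κ t)
    :
    ∀ t t' : ℝ, 0 ≤ t → t < t' → t' ≤ s₁ → γ t' < γ t :=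
  blockRR_gamma_strictAnti_general ε b s₁ s₂ hε hb hs₂ s hsdef κ γ hκ hγ
end
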